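/- Fix ω ≥ 1 and set h_j(ω) = Σ_{s=0}^{j-1} (4ω)^{-s} C(2s,s). Let (α_j)_{j≥1} be nonnegative reals with Σ_j j α_j = 1 and α_1 < 1. Then Σ_{i≥1} (1/4^{i-1}) C(2i-1, i-1) * i α_i / (ω^{i-1} h_i(ω)) < 1. In particular the quantity c = 4 / (1 − Σ_{i≥1} 4^{-(i-1)} C(2i-1,i-1) i α_i / (ω^{i-1} h_i(ω))) is a well-defined positive real number. -/

import Mathlib

/-- `h_j(ω) = ∑_{s=0}^{j-1} (4ω)^{-s} C(2s,s)`. -/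
noncomputable def hSeq (ω : ℝ) (j : ℕ) : ℝ :=
  ∑ s ∈ Finset.range j, ((4 * ω) ^ s)⁻¹ * (Nat.choose (2 * s) s : ℝ)

/-!
The coefficient `4^{-i} C(2i+1,i) (i+1)` is exactly `h_{i+1}(1)`, and for `ω ≥ 1` the polynomial
`ω^i h_{i+1}(ω)` in `ω` has nonnegative coefficients, so it dominates `h_{i+1}(1)`. Hence the
`i`-th summand is at most `α_{i+1}`, and `∑ α_j < ∑ j α_j = 1`: the inequality is strict because
`α_1 < 1` forces some `α_j` with `j ≥ 2` to be positive.
-/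

open Finset

lemma add_one_mul_choose_two_mul_add_one (i : ℕ) :
    (i + 1) * (2 * i + 1).choose i = (2 * i + 1) * i.centralBinom := by
  rw [← Nat.choose_symm_half, mul_comm, Nat.centralBinom, Nat.add_one_mul_choose_eq]

lemma hSeq_one_add_one (i : ℕ) :
    hSeq 1 (i + 1) = (2 * i + 1) * i.centralBinom / 4 ^ i := by
  induction i with
  | zero => simp [hSeq]
  | succ n ih =>
    have hrec : ((n + 1 : ℕ) : ℝ) * (n + 1).centralBinom = 2 * (2 * n + 1) * n.centralBinom := by
      exact_mod_cast Nat.succ_mul_centralBinom_succ n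
    rw [hSeq, sum_range_succ, ← hSeq, ih, mul_one, ← Nat.centralBinom]
    push_cast at hrec ⊢
    field_simp
    linear_combination (-2 * (4 : ℝ) ^ n) * hrec

lemma hSeq_one_add_one_eq_choose (i : ℕ) :
    hSeq 1 (i + 1) = ((4 : ℝ) ^ i)⁻¹ * (2 * i + 1).choose i * (i + 1) := by
  have h : ((i : ℝ) + 1) * (2 * i + 1).choose i = (2 * i + 1) * i.centralBinom := by
    exact_mod_cast add_one_mul_choose_two_mul_add_one i
  rw [hSeq_one_add_one, ← h]
  ring

lemma hSeq_pos {ω : ℝ} (hω : 0 ≤ ω) (i : ℕ) : 0 < hSeq ω (i + 1) := by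
  rw [hSeq, sum_range_succ']
  simp only [pow_zero, inv_one, mul_zero, Nat.choose_zero_right, Nat.cast_one, mul_one]
  have hnonneg : 0 ≤ ∑ s ∈ range i, ((4 * ω) ^ (s + 1))⁻¹ * ((2 * (s + 1)).choose (s + 1) : ℝ) :=
    sum_nonneg fun _ _ => by positivity
  linarith

lemma hSeq_one_le_pow_mul_hSeq {ω : ℝ} (hω : 1 ≤ ω) (i : ℕ) :
    hSeq 1 (i + 1) ≤ ω ^ i * hSeq ω (i + 1) := by
  rw [hSeq, hSeq, mul_sum]
  refine sum_le_sum fun s hs => ?_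
  have hsi : s ≤ i := Nat.lt_succ_iff.mp (mem_range.mp hs)
  calc ((4 * 1 : ℝ) ^ s)⁻¹ * ((2 * s).choose s : ℝ)
      = ω ^ s * ((4 * ω) ^ s)⁻¹ * ((2 * s).choose s : ℝ) := by
        have : ω ^ s ≠ 0 := by positivity
        field_simp
        ring
    _ ≤ ω ^ i * ((4 * ω) ^ s)⁻¹ * ((2 * s).choose s : ℝ) := by gcongr
    _ = ω ^ i * (((4 * ω) ^ s)⁻¹ * ((2 * s).choose s : ℝ)) := mul_assoc _ _ _

lemma inv_four_pow_mul_choose_mul_div_le {ω a : ℝ} (hω : 1 ≤ ω) (ha : 0 ≤ a) (i : ℕ) :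
    ((4 : ℝ) ^ i)⁻¹ * ((2 * i + 1).choose i : ℝ) * ((i + 1 : ℝ) * a) /
      (ω ^ i * hSeq ω (i + 1)) ≤ a := by
  have hD : 0 < ω ^ i * hSeq ω (i + 1) :=
    mul_pos (by positivity) (hSeq_pos (by linarith) i)
  rw [div_le_iff₀ hD, ← mul_assoc, ← hSeq_one_add_one_eq_choose, mul_comm a]
  exact mul_le_mul_of_nonneg_right (hSeq_one_le_pow_mul_hSeq hω i) ha

lemma summable_and_tsum_lt_of_hasSum_nat_mul {α : ℕ → ℝ} {s : ℝ} (hα : ∀ j, 0 ≤ α j)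
    (hsum : HasSum (fun j : ℕ => (j : ℝ) * α j) s) (hα1 : α 1 < s) :
    Summable (fun i => α (i + 1)) ∧ ∑' i, α (i + 1) < s := by
  have hshift : HasSum (fun i : ℕ => ((i : ℝ) + 1) * α (i + 1)) s := by
    simpa using (hasSum_nat_add_iff' 1).mpr hsum
  have hle : ∀ i : ℕ, α (i + 1) ≤ ((i : ℝ) + 1) * α (i + 1) := fun i =>
    le_mul_of_one_le_left (hα _) (by linarith [i.cast_nonneg (α := ℝ)])
  have hsummable : Summable (fun i => α (i + 1)) :=
    .of_nonneg_of_le (fun i => hα _) hle hshift.summable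
  obtain ⟨n, hn⟩ : ∃ n, 0 < α (n + 2) := by
    by_contra! h
    have hsingle : HasSum (fun j : ℕ => (j : ℝ) * α j) ((1 : ℕ) * α 1) :=
      hasSum_single 1 fun j hj => match j, hj with
        | 0, _ => by simp
        | n + 2, _ => by simp [le_antisymm (h n) (hα _)]
    simp only [Nat.cast_one, one_mul] at hsingle
    exact hα1.ne (hsingle.unique hsum)
  have hlt : α (n + 2) < ((n + 1 : ℕ) + 1 : ℝ) * α (n + 2) :=
    lt_mul_of_one_lt_left hn (by push_cast; linarith [n.cast_nonneg (α := ℝ)])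
  exact ⟨hsummable, (hsummable.tsum_lt_tsum hle hlt hshift.summable).trans_eq hshift.tsum_eq⟩

/-- Fix `ω ≥ 1` and nonnegative reals `(α_j)_{j≥1}` with `∑ j α_j = 1` and `α_1 < 1`.
Then `∑_{i≥1} 4^{-(i-1)} C(2i-1,i-1) i α_i / (ω^{i-1} h_i(ω)) < 1` (the series being
summable); in particular `c = 4/(1 - Σ)` is a well-defined positive real.
(Here the sum over `i ≥ 1` is written as a sum over `i ∈ ℕ` of the term at `i+1`.) -/
theorem statement10 (ω : ℝ) (hω : 1 ≤ ω) (α : ℕ → ℝ) (hα : ∀ j, 0 ≤ α j)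
    (hsum : HasSum (fun j : ℕ => (j : ℝ) * α j) 1) (hα1 : α 1 < 1) :
    Summable (fun i : ℕ =>
      ((4 : ℝ) ^ i)⁻¹ * (Nat.choose (2 * i + 1) i : ℝ) * ((i + 1 : ℝ) * α (i + 1)) /
        (ω ^ i * hSeq ω (i + 1))) ∧
    (∑' i : ℕ,
      ((4 : ℝ) ^ i)⁻¹ * (Nat.choose (2 * i + 1) i : ℝ) * ((i + 1 : ℝ) * α (i + 1)) /
        (ω ^ i * hSeq ω (i + 1))) < 1 ∧
    0 < 4 / (1 - ∑' i : ℕ,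
      ((4 : ℝ) ^ i)⁻¹ * (Nat.choose (2 * i + 1) i : ℝ) * ((i + 1 : ℝ) * α (i + 1)) /
        (ω ^ i * hSeq ω (i + 1))) := by
  obtain ⟨hα_summable, hα_lt⟩ := summable_and_tsum_lt_of_hasSum_nat_mul hα hsum hα1
  have hle := fun i => inv_four_pow_mul_choose_mul_div_le hω (hα (i + 1)) i
  have hnonneg : ∀ i : ℕ, 0 ≤ ((4 : ℝ) ^ i)⁻¹ * (Nat.choose (2 * i + 1) i : ℝ) *
      ((i + 1 : ℝ) * α (i + 1)) / (ω ^ i * hSeq ω (i + 1)) := fun i => by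
    have := hα (i + 1)
    have := hSeq_pos (by linarith : (0 : ℝ) ≤ ω) i
    positivity
  have hsummable := Summable.of_nonneg_of_le hnonneg hle hα_summable
  have hlt := (hsummable.tsum_le_tsum hle hα_summable).trans_lt hα_lt
  exact ⟨hsummable, hlt, div_pos four_pos (sub_pos.mpr hlt)⟩
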